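/- Let C be a left triangulated category with loop functor Ω, and M a rigid subcategory satisfying: (LC1) Ω restricted to M is fully faithful; (LC2) for any left triangle ΩM1 →f X →g M0 → M1 with M0, M1 ∈ M, any object Y ∈ ΩM ∗ M, and any morphism t: X → Y with tf = 0, t factors through g. Then the functor X ↦ Hom_C(Ω(−), X)|_M induces an equivalence (ΩM ∗ M)/M ≃ mod M. -/

import Mathlib

/-!
A left triangle `ΩM₁ ⟶f X ⟶g M₀ ⟶h M₁` with `M₀, M₁ ∈ 𝓜` yields, by rigidity and (LC1), a
presentation `Hom(−, M₀) ⟶ Hom(−, M₁) ⟶ Hom(Ω−, X)|_𝓜 ⟶ 0`, the second map being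
`a ↦ Ωa ≫ f`. So `Hom(Ω−, X)|_𝓜` is finitely presented, and every finitely presented module
arises this way from a left triangle on its presenting morphism. A morphism of modules is
determined by the image of `f`, which lifts to a morphism of triangles by (LTR3): the functor
is full. A morphism `t` lies in the kernel of the functor iff `f ≫ t = 0`, iff `t` factors
through `g` by (LC2); conversely maps through `𝓜` are killed by rigidity.
-/

open CategoryTheory CategoryTheory.Limits Opposite ZeroObject

universe v u

/-- A left triangulated category `(C, Ω, ◁)`: an additive category with an additive
loop endofunctor `Ω` and a class of left triangles `ΩZ ⟶ X ⟶ Y ⟶ Z` satisfying the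
axioms (LTR0)–(LTR4), dual to the right triangulated axioms. -/
structure LeftTriangulated (C : Type u) [Category.{v} C] [Preadditive C]
    [HasZeroObject C] where
  /-- the loop (shift) functor `Ω` -/
  loop : C ⥤ C
  loop_additive : loop.Additive
  /-- the class of left triangles -/
  IsTri : ∀ ⦃X Y Z : C⦄, (loop.obj Z ⟶ X) → (X ⟶ Y) → (Y ⟶ Z) → Prop
  /-- (LTR0): left triangles are closed under isomorphism of sequences -/
  ltr0 : ∀ ⦃X Y Z X' Y' Z' : C⦄ (x : loop.obj Z ⟶ X) (y : X ⟶ Y) (z : Y ⟶ Z)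
      (x' : loop.obj Z' ⟶ X') (y' : X' ⟶ Y') (z' : Y' ⟶ Z')
      (f : X ≅ X') (g : Y ≅ Y') (h : Z ≅ Z'),
      IsTri x y z → x ≫ f.hom = loop.map h.hom ≫ x' → y ≫ g.hom = f.hom ≫ y' →
      z ≫ h.hom = g.hom ≫ z' → IsTri x' y' z'
  /-- (LTR1a): `Ω0 ⟶ X = X ⟶ 0` is a left triangle -/
  ltr1_id : ∀ X : C, IsTri (0 : loop.obj (0 : C) ⟶ X) (𝟙 X) 0
  /-- (LTR1b): every morphism embeds in a left triangle -/
  ltr1_ex : ∀ ⦃Y Z : C⦄ (z : Y ⟶ Z), ∃ (X : C) (x : loop.obj Z ⟶ X) (y : X ⟶ Y),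
      IsTri x y z
  /-- (LTR2): rotation -/
  ltr2 : ∀ ⦃X Y Z : C⦄ (x : loop.obj Z ⟶ X) (y : X ⟶ Y) (z : Y ⟶ Z),
      IsTri x y z → IsTri (-loop.map z) x y
  /-- (LTR3): morphisms of left triangles -/
  ltr3 : ∀ ⦃X Y Z X' Y' Z' : C⦄ (x : loop.obj Z ⟶ X) (y : X ⟶ Y) (z : Y ⟶ Z)
      (x' : loop.obj Z' ⟶ X') (y' : X' ⟶ Y') (z' : Y' ⟶ Z')
      (g : Y ⟶ Y') (h : Z ⟶ Z'), IsTri x y z → IsTri x' y' z' →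
      z ≫ h = g ≫ z' →
      ∃ f : X ⟶ X', x ≫ f = loop.map h ≫ x' ∧ y ≫ g = f ≫ y'
  /-- (LTR4): the octahedron axiom -/
  ltr4 : ∀ ⦃X Y Z Y'' Z' : C⦄ (x : loop.obj Z ⟶ X) (y : X ⟶ Y) (z : Y ⟶ Z)
      (x' : loop.obj Z' ⟶ Y'') (y' : Y'' ⟶ Z) (z' : Z ⟶ Z'),
      IsTri x y z → IsTri x' y' z' →
      ∃ (X' : C) (u : loop.obj Z' ⟶ X') (v : X' ⟶ Y) (g : X ⟶ X') (h : X' ⟶ Y''),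
        IsTri u v (z ≫ z') ∧ IsTri (loop.map y' ≫ x) g h ∧
        g ≫ v = y ∧ u ≫ h = x' ∧ h ≫ y' = v ≫ z
universe v' u' v'' u''

/-- `f` factors through an object belonging to `B`. -/
def FactorsThru {A : Type u''} [Category.{v''} A] (B : Set A) {X Y : A} (f : X ⟶ Y) : Prop :=
  ∃ (Z : A) (_ : Z ∈ B) (g : X ⟶ Z) (h : Z ⟶ Y), g ≫ h = f

variable {C : Type u} [Category.{v} C] [Preadditive C] [HasZeroObject C]

/-- The full subcategory on a set of objects. -/
abbrev Subcat (𝓜 : Set C) := ObjectProperty.FullSubcategory (fun X : C => X ∈ 𝓜)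

/-- The functor `X ↦ Hom_C(−, X)|_𝓜`, the restricted preadditive Yoneda embedding. -/
def resYoneda (𝓜 : Set C) : C ⥤ ((Subcat 𝓜)ᵒᵖ ⥤ AddCommGrpCat.{v}) :=
  preadditiveYoneda ⋙
    (Functor.whiskeringLeft _ _ _).obj (ObjectProperty.ι (fun X : C => X ∈ 𝓜)).op

/-- A contravariant additive functor `F` (an `M`-module) is finitely presented if it is
the cokernel of a morphism between representable functors, i.e. there are `A B : M`,
`h : A ⟶ B` and `π : Hom(−,B) ⟶ F` such that
`Hom(−,A) ⟶ Hom(−,B) ⟶ F ⟶ 0` is exact. -/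
def FinPres {M : Type u'} [Category.{v'} M] [Preadditive M]
    (F : Mᵒᵖ ⥤ AddCommGrpCat.{v'}) : Prop :=
  ∃ (A B : M) (h : A ⟶ B) (π : preadditiveYoneda.obj B ⟶ F),
    (∀ m : M, Function.Surjective (π.app (op m))) ∧
    (∀ (m : M) (x : (preadditiveYoneda.obj B).obj (op m)),
      π.app (op m) x = 0 ↔ ∃ y, (preadditiveYoneda.map h).app (op m) y = x)

/-- `mod M`: the category of finitely presented contravariant additive functors
`M → Ab`. -/
abbrev ModCat (M : Type u') [Category.{v'} M] [Preadditive M] :=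
  ObjectProperty.FullSubcategory (fun F : Mᵒᵖ ⥤ AddCommGrpCat.{v'} => F.Additive ∧ FinPres F)

/-- The functor `X ↦ Hom_C(Ω(−), X)|_𝓜`. -/
def loopResYoneda (T : LeftTriangulated C) (𝓜 : Set C) :
    C ⥤ ((Subcat 𝓜)ᵒᵖ ⥤ AddCommGrpCat.{v}) :=
  preadditiveYoneda ⋙
    (Functor.whiskeringLeft _ _ _).obj (ObjectProperty.ι (fun X : C => X ∈ 𝓜) ⋙ T.loop).op

/-- The natural transformation `Hom_𝓜(−, M1) ⟶ Hom_C(Ω(−), X)|_𝓜` induced by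
`f : ΩM1 ⟶ X`, sending `a : m ⟶ M1` to `Ωa ≫ f`. -/
def presMap (T : LeftTriangulated C) (𝓜 : Set C) {M1 X : C} (f : T.loop.obj M1 ⟶ X) :
    (resYoneda 𝓜).obj M1 ⟶ (loopResYoneda T 𝓜).obj X where
  app m := AddCommGrpCat.ofHom
    (AddMonoidHom.mk' (fun (a : m.unop.obj ⟶ M1) => (T.loop.map a ≫ f : T.loop.obj m.unop.obj ⟶ X))
      (by
        haveI := T.loop_additive
        intro (a : m.unop.obj ⟶ M1) (b : m.unop.obj ⟶ M1)
        show T.loop.map (a + b) ≫ f = T.loop.map a ≫ f + T.loop.map b ≫ f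
        rw [Functor.map_add, Preadditive.add_comp]))
  naturality := by
    intro m m' φ
    ext a
    change m.unop.obj ⟶ M1 at a
    show T.loop.map ((φ.unop.hom : m'.unop.obj ⟶ m.unop.obj) ≫ a) ≫ f =
      T.loop.map (φ.unop.hom : m'.unop.obj ⟶ m.unop.obj) ≫ T.loop.map a ≫ f
    rw [Functor.map_comp, Category.assoc]


variable (T : LeftTriangulated C) (𝓜 : Set C)

/-- The subcategory `Ω𝓜 ∗ 𝓜` of objects `X` admitting a left triangle
`ΩM1 ⟶ X ⟶ M0 ⟶ M1` with `M0, M1 ∈ 𝓜`. -/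
def OmegaStar : Set C :=
  {X | ∃ M0 M1 : C, M0 ∈ 𝓜 ∧ M1 ∈ 𝓜 ∧
    ∃ (f : T.loop.obj M1 ⟶ X) (g : X ⟶ M0) (h : M0 ⟶ M1), T.IsTri f g h}

/-- The hom relation on `Ω𝓜 ∗ 𝓜` identifying morphisms whose difference factors
through an object of `𝓜`; its quotient is `(Ω𝓜 ∗ 𝓜)/𝓜`. -/
def starLRel : HomRel (Subcat (OmegaStar T 𝓜)) :=
  fun {X Y} (f g : X ⟶ Y) =>
    FactorsThru 𝓜 (X := X.obj) (Y := Y.obj) (f - g).hom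

universe w

namespace CategoryTheory

section
variable {D : Type*} [Category D] {P F G : D ⥤ AddCommGrpCat.{w}}

theorem NatTrans.epi_of_surjective_app (π : P ⟶ F) (hπ : ∀ d, Function.Surjective (π.app d)) :
    Epi π :=
  have := fun d => ConcreteCategory.epi_of_surjective _ (hπ d)
  NatTrans.epi_of_epi_app π

theorem NatTrans.exists_comp_eq_of_surjective_app (π : P ⟶ F) (π' : P ⟶ G)
    (hπ : ∀ d, Function.Surjective (π.app d))
    (hker : ∀ d x, π.app d x = 0 → π'.app d x = 0) : ∃ σ : F ⟶ G, π ≫ σ = π' := by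
  let σ d : F.obj d ⟶ G.obj d := AddCommGrpCat.ofHom
    ((π.app d).hom.liftOfSurjective (hπ d) ⟨(π'.app d).hom, fun x hx => hker d x hx⟩)
  have hσ d x : σ d (π.app d x) = π'.app d x :=
    AddMonoidHom.liftOfRightInverse_comp_apply _ _ _ _ x
  refine ⟨{ app := σ, naturality := fun d d' ν => ?_ }, by ext d x; exact hσ d x⟩
  ext y
  obtain ⟨x, rfl⟩ := hπ d y
  simp only [ConcreteCategory.comp_apply, ← NatTrans.naturality_apply, hσ]

theorem nonempty_iso_of_surjective_app_of_ker_eq (π : P ⟶ F) (π' : P ⟶ G)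
    (hπ : ∀ d, Function.Surjective (π.app d)) (hπ' : ∀ d, Function.Surjective (π'.app d))
    (hker : ∀ d x, π.app d x = 0 ↔ π'.app d x = 0) : Nonempty (F ≅ G) := by
  obtain ⟨σ, hσ⟩ := NatTrans.exists_comp_eq_of_surjective_app π π' hπ fun d x => (hker d x).1
  obtain ⟨τ, hτ⟩ := NatTrans.exists_comp_eq_of_surjective_app π' π hπ' fun d x => (hker d x).2
  have := NatTrans.epi_of_surjective_app π hπ
  have := NatTrans.epi_of_surjective_app π' hπ'
  exact ⟨{ hom := σ, inv := τ
           hom_inv_id := by rw [← cancel_epi π, reassoc_of% hσ, hτ, Category.comp_id]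
           inv_hom_id := by rw [← cancel_epi π', reassoc_of% hτ, hσ, Category.comp_id] }⟩

end

theorem Quotient.isEquivalence_lift {D E : Type*} [Category D] [Category E]
    (r : HomRel D) (L : D ⥤ E) (H : ∀ (X Y : D) (f g : X ⟶ Y), r f g → L.map f = L.map g)
    [L.Full] [L.EssSurj] (hr : ∀ ⦃X Y : D⦄ (f g : X ⟶ Y), L.map f = L.map g → r f g) :
    (Quotient.lift r L H).IsEquivalence where
  faithful := ⟨by rintro ⟨_⟩ ⟨_⟩ ⟨f⟩ ⟨g⟩ h; exact Quotient.sound r (hr f g h)⟩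
  full := ⟨by
    rintro ⟨X⟩ ⟨Y⟩ (f : L.obj X ⟶ L.obj Y)
    obtain ⟨f, rfl⟩ := L.map_surjective f
    exact ⟨(Quotient.functor r).map f, rfl⟩⟩
  essSurj := ⟨fun Z => ⟨(Quotient.functor r).obj (L.objPreimage Z), ⟨L.objObjPreimageIso Z⟩⟩⟩

end CategoryTheory

section
variable {T 𝓜}

theorem LeftTriangulated.IsTri.comp_eq_zero {X Y Z : C} {x : T.loop.obj Z ⟶ X} {y : X ⟶ Y}
    {z : Y ⟶ Z} (h : T.IsTri x y z) : x ≫ y = 0 := by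
  obtain ⟨u, hxu, hyu⟩ := T.ltr3 x y z 0 (𝟙 Y) 0 (𝟙 Y) 0 h (T.ltr1_id Y) (by simp)
  rw [Category.comp_id] at hyu
  simpa [hyu] using hxu

theorem LeftTriangulated.IsTri.loop_map_comp_eq_zero {X Y Z : C} {x : T.loop.obj Z ⟶ X}
    {y : X ⟶ Y} {z : Y ⟶ Z} (h : T.IsTri x y z) : T.loop.map z ≫ x = 0 := by
  simpa using (T.ltr2 x y z h).comp_eq_zero

theorem LeftTriangulated.IsTri.exists_comp_eq_of_comp_eq_zero {W X Y Z : C}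
    {x : T.loop.obj Z ⟶ X} {y : X ⟶ Y} {z : Y ⟶ Z} (h : T.IsTri x y z) (t : W ⟶ X)
    (ht : t ≫ y = 0) : ∃ s : W ⟶ T.loop.obj Z, s ≫ x = t := by
  obtain ⟨s, -, hs⟩ := T.ltr3 0 (𝟙 W) 0 (-T.loop.map z) x y t 0 (T.ltr1_id W) (T.ltr2 x y z h)
    (by simp [ht])
  exact ⟨s, by simpa using hs.symm⟩

end

def IsRigid : Prop :=
  ∀ ⦃m m' : C⦄, m ∈ 𝓜 → m' ∈ 𝓜 → ∀ φ : T.loop.obj m ⟶ m', φ = 0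

def LoopFullyFaithfulOn : Prop :=
  ∀ ⦃m m' : C⦄, m ∈ 𝓜 → m' ∈ 𝓜 → Function.Bijective (fun φ : m ⟶ m' => T.loop.map φ)

instance (X : C) : ((loopResYoneda T 𝓜).obj X).Additive := by
  have := T.loop_additive
  exact inferInstanceAs
    ((ObjectProperty.ι (· ∈ 𝓜) ⋙ T.loop).op ⋙ preadditiveYoneda.obj X).Additive

/-- `a ↦ Ωa ≫ f` -/
def loopPres {B : Subcat 𝓜} {X : C} (f : T.loop.obj B.obj ⟶ X) :
    preadditiveYoneda.obj B ⟶ (loopResYoneda T 𝓜).obj X where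
  app m := AddCommGrpCat.ofHom <|
    have := T.loop_additive
    (Preadditive.rightComp _ f).comp (ObjectProperty.ι (· ∈ 𝓜) ⋙ T.loop).mapAddHom
  naturality m m' φ := by
    ext a
    exact T.loop.map_comp_assoc _ _ _

section
variable {T 𝓜}

@[simp]
theorem loopPres_app_apply {B m : Subcat 𝓜} {X : C} (f : T.loop.obj B.obj ⟶ X) (a : m ⟶ B) :
    (loopPres T 𝓜 f).app (op m) a = T.loop.map a.hom ≫ f :=
  rfl

theorem loopPres_comp {B : Subcat 𝓜} {X Y : C} (f : T.loop.obj B.obj ⟶ X)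
    (α : (loopResYoneda T 𝓜).obj X ⟶ (loopResYoneda T 𝓜).obj Y) :
    loopPres T 𝓜 f ≫ α = loopPres T 𝓜 (α.app (op B) f) := by
  ext m a
  exact NatTrans.naturality_apply α a.op f

section
variable {M0 M1 : Subcat 𝓜} {X : C} {f : T.loop.obj M1.obj ⟶ X} {g : X ⟶ M0.obj}
  {h : M0.obj ⟶ M1.obj}

theorem loopPres_app_surjective (rigid : IsRigid T 𝓜) (LC1 : LoopFullyFaithfulOn T 𝓜)
    (htri : T.IsTri f g h) (m : (Subcat 𝓜)ᵒᵖ) : Function.Surjective ((loopPres T 𝓜 f).app m) := by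
  intro (φ : T.loop.obj m.unop.obj ⟶ X)
  obtain ⟨s, hs⟩ := htri.exists_comp_eq_of_comp_eq_zero φ (rigid m.unop.2 M0.2 _)
  obtain ⟨a, rfl⟩ := (LC1 m.unop.2 M1.2).2 s
  exact ⟨ObjectProperty.homMk a, hs⟩

theorem loopPres_app_eq_zero_iff (LC1 : LoopFullyFaithfulOn T 𝓜) (htri : T.IsTri f g h)
    {m : Subcat 𝓜} (a : m ⟶ M1) :
    (loopPres T 𝓜 f).app (op m) a = 0 ↔ ∃ b : m ⟶ M0, b ≫ ObjectProperty.homMk h = a := by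
  have := T.loop_additive
  rw [loopPres_app_apply]
  constructor
  · intro ha
    obtain ⟨s, hs⟩ := (T.ltr2 f g h htri).exists_comp_eq_of_comp_eq_zero _ ha
    obtain ⟨b, rfl⟩ := (LC1 m.2 M0.2).2 s
    refine ⟨ObjectProperty.homMk (-b), InducedCategory.hom_ext ((LC1 m.2 M1.2).1 ?_)⟩
    simpa using hs
  · rintro ⟨b, rfl⟩
    change T.loop.map (b.hom ≫ h) ≫ f = 0
    rw [T.loop.map_comp, Category.assoc, htri.loop_map_comp_eq_zero, comp_zero]

end

theorem exists_isTri_of_mem_omegaStar {X : C} (hX : X ∈ OmegaStar T 𝓜) :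
    ∃ (M0 M1 : Subcat 𝓜) (f : T.loop.obj M1.obj ⟶ X) (g : X ⟶ M0.obj) (h : M0.obj ⟶ M1.obj),
      T.IsTri f g h := by
  obtain ⟨M0, M1, hM0, hM1, htri⟩ := hX
  exact ⟨⟨M0, hM0⟩, ⟨M1, hM1⟩, htri⟩

theorem finPres_loopResYoneda (rigid : IsRigid T 𝓜) (LC1 : LoopFullyFaithfulOn T 𝓜) {X : C}
    (hX : X ∈ OmegaStar T 𝓜) : FinPres ((loopResYoneda T 𝓜).obj X) := by
  obtain ⟨M0, M1, f, g, h, htri⟩ := exists_isTri_of_mem_omegaStar hX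
  exact ⟨M0, M1, ObjectProperty.homMk h, loopPres T 𝓜 f,
    fun m => loopPres_app_surjective rigid LC1 htri (op m),
    fun m a => loopPres_app_eq_zero_iff LC1 htri a⟩

theorem loopResYoneda_map_eq_of_starLRel (rigid : IsRigid T 𝓜) {X Y : Subcat (OmegaStar T 𝓜)}
    {t t' : X ⟶ Y} (htt' : starLRel T 𝓜 t t') :
    (loopResYoneda T 𝓜).map t.hom = (loopResYoneda T 𝓜).map t'.hom := by
  obtain ⟨Z, hZ, u, v, huv⟩ := htt'
  ext m (φ : T.loop.obj m.unop.obj ⟶ X.obj)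
  change φ ≫ t.hom = φ ≫ t'.hom
  rw [← sub_eq_zero, ← Preadditive.comp_sub]
  change φ ≫ (t - t').hom = 0
  rw [← huv, ← Category.assoc, rigid m.unop.2 hZ (φ ≫ u), zero_comp]

theorem starLRel_of_loopResYoneda_map_eq
    (LC2 : ∀ ⦃X M0 M1 : C⦄, M0 ∈ 𝓜 → M1 ∈ 𝓜 →
      ∀ (f : T.loop.obj M1 ⟶ X) (g : X ⟶ M0) (h : M0 ⟶ M1), T.IsTri f g h →
      ∀ ⦃Y : C⦄, Y ∈ OmegaStar T 𝓜 → ∀ t : X ⟶ Y, f ≫ t = 0 →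
        ∃ s : M0 ⟶ Y, g ≫ s = t)
    {X Y : Subcat (OmegaStar T 𝓜)} {t t' : X ⟶ Y}
    (htt' : (loopResYoneda T 𝓜).map t.hom = (loopResYoneda T 𝓜).map t'.hom) :
    starLRel T 𝓜 t t' := by
  obtain ⟨M0, M1, f, g, h, htri⟩ := exists_isTri_of_mem_omegaStar X.2
  have hf : f ≫ (t - t').hom = 0 := by
    change f ≫ (t.hom - t'.hom) = 0
    rw [Preadditive.comp_sub, sub_eq_zero]
    exact congr_arg (fun α => α.app (op M1) f) htt'
  obtain ⟨s, hs⟩ := LC2 M0.2 M1.2 f g h htri Y.2 _ hf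
  exact ⟨M0.obj, M0.2, g, s, hs⟩

theorem exists_loopResYoneda_map_eq (rigid : IsRigid T 𝓜) (LC1 : LoopFullyFaithfulOn T 𝓜)
    {X Y : C} (hX : X ∈ OmegaStar T 𝓜) (hY : Y ∈ OmegaStar T 𝓜)
    (α : (loopResYoneda T 𝓜).obj X ⟶ (loopResYoneda T 𝓜).obj Y) :
    ∃ t : X ⟶ Y, (loopResYoneda T 𝓜).map t = α := by
  obtain ⟨M0, M1, f, g, h, htri⟩ := exists_isTri_of_mem_omegaStar hX
  obtain ⟨N0, N1, f', g', h', htri'⟩ := exists_isTri_of_mem_omegaStar hY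
  obtain ⟨w, hw⟩ := loopPres_app_surjective rigid LC1 htri' (op M1) (α.app (op M1) f)
  have hαh : T.loop.map h ≫ (α.app (op M1) f : T.loop.obj M1.obj ⟶ Y) = 0 := by
    refine (NatTrans.naturality_apply α (ObjectProperty.homMk h).op f).symm.trans ?_
    change α.app (op M0) (T.loop.map h ≫ f) = 0
    rw [htri.loop_map_comp_eq_zero]
    exact map_zero _
  have hhw : (loopPres T 𝓜 f').app (op M0) (ObjectProperty.homMk h ≫ w) = 0 := by
    change T.loop.map (h ≫ w.hom) ≫ f' = 0
    rw [T.loop.map_comp, Category.assoc, ← hαh]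
    exact congr_arg _ hw
  obtain ⟨s, hs⟩ := (loopPres_app_eq_zero_iff LC1 htri' _).1 hhw
  obtain ⟨t, hft, -⟩ := T.ltr3 f g h f' g' h' s.hom w.hom htri htri'
    (congr_arg InducedCategory.Hom.hom hs).symm
  refine ⟨t, ?_⟩
  have := NatTrans.epi_of_surjective_app _ (loopPres_app_surjective rigid LC1 htri)
  rw [← cancel_epi (loopPres T 𝓜 f), loopPres_comp, loopPres_comp]
  exact congr_arg _ (hft.trans hw)

theorem exists_loopResYoneda_iso (rigid : IsRigid T 𝓜) (LC1 : LoopFullyFaithfulOn T 𝓜)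
    {F : (Subcat 𝓜)ᵒᵖ ⥤ AddCommGrpCat.{v}} (hF : FinPres F) :
    ∃ X ∈ OmegaStar T 𝓜, Nonempty ((loopResYoneda T 𝓜).obj X ≅ F) := by
  obtain ⟨A, B, h, π, hπ, hker⟩ := hF
  obtain ⟨X, f, g, htri⟩ := T.ltr1_ex h.hom
  refine ⟨X, ⟨A.obj, B.obj, A.2, B.2, f, g, h.hom, htri⟩, ?_⟩
  exact nonempty_iso_of_surjective_app_of_ker_eq (loopPres T 𝓜 f) π
    (loopPres_app_surjective rigid LC1 htri) (fun m => hπ m.unop)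
    fun m a => (loopPres_app_eq_zero_iff LC1 htri a).trans (hker m.unop a).symm

def loopResYonedaMod (rigid : IsRigid T 𝓜) (LC1 : LoopFullyFaithfulOn T 𝓜) :
    Subcat (OmegaStar T 𝓜) ⥤ ModCat (Subcat 𝓜) :=
  ObjectProperty.lift _ (ObjectProperty.ι _ ⋙ loopResYoneda T 𝓜)
    fun X => ⟨inferInstanceAs ((loopResYoneda T 𝓜).obj X.obj).Additive,
      finPres_loopResYoneda rigid LC1 X.2⟩

theorem loopResYonedaMod_full (rigid : IsRigid T 𝓜) (LC1 : LoopFullyFaithfulOn T 𝓜) :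
    (loopResYonedaMod rigid LC1).Full where
  map_surjective {X Y} α := by
    obtain ⟨t, ht⟩ := exists_loopResYoneda_map_eq rigid LC1 X.2 Y.2 α.hom
    exact ⟨ObjectProperty.homMk t, InducedCategory.hom_ext ht⟩

theorem loopResYonedaMod_essSurj (rigid : IsRigid T 𝓜) (LC1 : LoopFullyFaithfulOn T 𝓜) :
    (loopResYonedaMod rigid LC1).EssSurj where
  mem_essImage F := by
    obtain ⟨X, hX, ⟨e⟩⟩ := exists_loopResYoneda_iso rigid LC1 F.2.2
    exact ⟨⟨X, hX⟩, ⟨ObjectProperty.isoMk _ e⟩⟩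

end

/-- Let `C` be a left triangulated category and `𝓜` a rigid
subcategory satisfying (LC1) and (LC2).  Then `X ↦ Hom_C(Ω(−),X)|_𝓜` induces an
equivalence `(Ω𝓜 ∗ 𝓜)/𝓜 ≌ mod 𝓜`. -/
theorem stmt14
    (rigid : ∀ ⦃m m' : C⦄, m ∈ 𝓜 → m' ∈ 𝓜 → ∀ φ : T.loop.obj m ⟶ m', φ = 0)
    (LC1 : ∀ ⦃m m' : C⦄, m ∈ 𝓜 → m' ∈ 𝓜 →
      Function.Bijective (fun φ : m ⟶ m' => T.loop.map φ))
    (LC2 : ∀ ⦃X M0 M1 : C⦄, M0 ∈ 𝓜 → M1 ∈ 𝓜 →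
      ∀ (f : T.loop.obj M1 ⟶ X) (g : X ⟶ M0) (h : M0 ⟶ M1), T.IsTri f g h →
      ∀ ⦃Y : C⦄, Y ∈ OmegaStar T 𝓜 → ∀ t : X ⟶ Y, f ≫ t = 0 →
        ∃ s : M0 ⟶ Y, g ≫ s = t) :
    ∃ E : CategoryTheory.Quotient (starLRel T 𝓜) ⥤ ModCat (Subcat 𝓜),
      E.IsEquivalence ∧
      Nonempty (Quotient.functor (starLRel T 𝓜) ⋙ E ⋙ ObjectProperty.ι _ ≅
        ObjectProperty.ι _ ⋙ loopResYoneda T 𝓜) := by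
  have := loopResYonedaMod_full rigid LC1
  have := loopResYonedaMod_essSurj rigid LC1
  refine ⟨CategoryTheory.Quotient.lift _ (loopResYonedaMod rigid LC1) fun _ _ _ _ htt' =>
    InducedCategory.hom_ext (loopResYoneda_map_eq_of_starLRel rigid htt'), ?_, ⟨Iso.refl _⟩⟩
  exact Quotient.isEquivalence_lift _ _ _ fun _ _ _ _ htt' =>
    starLRel_of_loopResYoneda_map_eq LC2 (InducedCategory.hom_ext_iff.1 htt' :)
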